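/- arXiv:2103.09628 — 2 statements merged into one kernel-verified Lean document; each statement's English description precedes it below -/
import Mathlib

section
/- For any positive definite Hermitian matrices X and Y of size N, the quantity D_KL(X,Y) = Tr(X Y^{-1}) - log det(X Y^{-1}) - N is nonnegative, and equals zero if and only if X = Y. -/
open Matrix ComplexOrder

/-!
Write `Y⁻¹ = C⋆ C` with `C` invertible. By cyclicity of trace and determinant, `D_KL(X, Y)` equals
`tr M - log det M - N` for the positive definite matrix `M = C X C⋆`, which in terms of the
eigenvalues `λᵢ > 0` of `M` is `∑ (λᵢ - log λᵢ - 1)`. Each summand is nonnegative since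
`log λ ≤ λ - 1`, with equality only at `λ = 1`; so `D_KL(X, Y) = 0` forces `M = 1`, i.e. `X = Y`.
-/

namespace Matrix

variable {n 𝕜 : Type*} [Fintype n] [DecidableEq n] [RCLike 𝕜]

noncomputable def traceSubLogDet (A : Matrix n n 𝕜) : ℝ :=
  RCLike.re A.trace - Real.log (RCLike.re A.det) - Fintype.card n

lemma traceSubLogDet_mul_comm (A B : Matrix n n 𝕜) :
    traceSubLogDet (A * B) = traceSubLogDet (B * A) := by
  rw [traceSubLogDet, traceSubLogDet, trace_mul_comm, det_mul_comm]

@[simp]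
lemma traceSubLogDet_one : traceSubLogDet (1 : Matrix n n 𝕜) = 0 := by
  simp [traceSubLogDet]

lemma IsHermitian.eq_one_of_eigenvalues_eq_one {A : Matrix n n 𝕜} (hA : A.IsHermitian)
    (h : ∀ i, hA.eigenvalues i = 1) : A = 1 := by
  refine CFC.eq_one_of_spectrum_subset_one (R := ℝ) A ?_ hA.isSelfAdjoint
  rw [hA.spectrum_real_eq_range_eigenvalues]
  rintro _ ⟨i, rfl⟩
  exact h i

lemma PosDef.traceSubLogDet_eq_sum_eigenvalues {A : Matrix n n 𝕜} (hA : A.PosDef) :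
    traceSubLogDet A =
      ∑ i, (hA.1.eigenvalues i - Real.log (hA.1.eigenvalues i) - 1) := by
  have hlog : Real.log (RCLike.re A.det) = ∑ i, Real.log (hA.1.eigenvalues i) := by
    rw [hA.1.det_eq_prod_eigenvalues, ← RCLike.ofReal_prod, RCLike.ofReal_re,
      Real.log_prod fun i _ => (hA.eigenvalues_pos i).ne']
  rw [traceSubLogDet, hlog, hA.1.trace_eq_sum_eigenvalues]
  simp [Finset.sum_sub_distrib]

lemma PosDef.traceSubLogDet_nonneg {A : Matrix n n 𝕜} (hA : A.PosDef) :
    0 ≤ traceSubLogDet A := by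
  rw [hA.traceSubLogDet_eq_sum_eigenvalues]
  refine Finset.sum_nonneg fun i _ => ?_
  linarith [Real.log_le_sub_one_of_pos (hA.eigenvalues_pos i)]

lemma PosDef.traceSubLogDet_eq_zero_iff {A : Matrix n n 𝕜} (hA : A.PosDef) :
    traceSubLogDet A = 0 ↔ A = 1 := by
  refine ⟨fun h => hA.1.eq_one_of_eigenvalues_eq_one fun i => ?_, fun h => h ▸ traceSubLogDet_one⟩
  rw [hA.traceSubLogDet_eq_sum_eigenvalues] at h
  have hterms_nonneg :
      ∀ j ∈ Finset.univ, 0 ≤ hA.1.eigenvalues j - Real.log (hA.1.eigenvalues j) - 1 :=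
    fun j _ => by linarith [Real.log_le_sub_one_of_pos (hA.eigenvalues_pos j)]
  have hterm := (Finset.sum_eq_zero_iff_of_nonneg hterms_nonneg).mp h i (Finset.mem_univ i)
  by_contra hne
  linarith [Real.log_lt_sub_one_of_pos (hA.eigenvalues_pos i) hne]

end Matrix

/-- Gaussian KL divergence `D_KL(X,Y) = Tr(X Y⁻¹) - log det(X Y⁻¹) - N` is nonnegative for
positive definite Hermitian `X, Y`, and vanishes iff `X = Y`. -/
theorem kl_divergence_nonneg_and_eq_zero_iff {N : ℕ}
    (X Y : Matrix (Fin N) (Fin N) ℂ) (hX : X.PosDef) (hY : Y.PosDef) :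
    0 ≤ (X * Y⁻¹).trace.re - Real.log ((X * Y⁻¹).det.re) - N ∧
      ((X * Y⁻¹).trace.re - Real.log ((X * Y⁻¹).det.re) - N = 0 ↔ X = Y) := by
  open scoped MatrixOrder in
  obtain ⟨C, hC, hYC⟩ :=
    CStarAlgebra.isStrictlyPositive_iff_eq_star_mul_self.mp hY.inv.isStrictlyPositive
  have hM : (C * X * star C).PosDef := hC.posDef_star_right_conjugate_iff.mpr hX
  have hD : (X * Y⁻¹).trace.re - Real.log ((X * Y⁻¹).det.re) - N =
      traceSubLogDet (C * X * star C) := calc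
    _ = traceSubLogDet (X * Y⁻¹) := by simp [traceSubLogDet]
    _ = traceSubLogDet (C * X * star C) := by
      rw [hYC, ← mul_assoc, traceSubLogDet_mul_comm, ← mul_assoc]
  have hXY : C * X * star C = 1 ↔ X = Y := by
    have hYdet : IsUnit Y.det := hY.det_pos.ne'.isUnit
    rw [mul_assoc, mul_eq_one_comm, mul_assoc, ← hYC]
    refine ⟨fun h => ?_, fun h => h ▸ mul_nonsing_inv Y hYdet⟩
    rw [← nonsing_inv_mul_cancel_right (A := Y) X hYdet, h, one_mul]
  rw [hD, hM.traceSubLogDet_eq_zero_iff, hXY]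
  exact ⟨hM.traceSubLogDet_nonneg, Iff.rfl⟩
end

section
/- Let z be uniformly distributed on the unit sphere of C^N and Λ a fixed N×N Hermitian matrix. Then E[(z^H Λ z)²] = (Tr(Λ²) + Tr(Λ)²) / (N(N+1)). -/
/-!
Diagonalising `Λ = U D Uᴴ` and using the invariance of `μ` under `Uᴴ` reduces the claim to a
real diagonal `Λ = diag d`, for which `(zᴴ Λ z)² = ∑ₖₗ dₖ dₗ |zₖ|² |zₗ|²`. The moments
`Mₖₗ = E[|zₖ|² |zₗ|²]` are pinned down by unitary invariance: a coordinate swap shows that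
`Mₖₖ` does not depend on `k`, and averaging over the four unitaries `zᵢ ↦ (zᵢ + iᵏ zⱼ)/√2`
(the cross terms cancel) gives `Mᵢⱼ = Mᵢᵢ / 2` for `i ≠ j`. Since `∑ₖₗ Mₖₗ = E[‖z‖⁴] = 1`,
this forces `Mₖₗ = (1 + δₖₗ)/(N(N+1))`.
-/

open Matrix MeasureTheory
open scoped ComplexConjugate

namespace Matrix

variable {ι : Type*} [Fintype ι] [DecidableEq ι] {i j k : ι} {c s : ℂ}

noncomputable def givens (i j : ι) (c s : ℂ) : Matrix ι ι ℂ :=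
  1 + single i i (c - 1) + single i j s - single j i (conj s) + single j j (conj c - 1)

lemma givens_mulVec_apply_left (hij : i ≠ j) (z : ι → ℂ) :
    (givens i j c s *ᵥ z) i = c * z i + s * z j := by
  simp only [givens, add_mulVec, sub_mulVec, one_mulVec, single_mulVec, Pi.add_apply,
    Pi.sub_apply, Function.update_self, ne_eq, hij, not_false_eq_true, Function.update_of_ne,
    Pi.zero_apply, sub_zero, add_zero]
  ring

lemma givens_mulVec_apply_right (hij : i ≠ j) (z : ι → ℂ) :
    (givens i j c s *ᵥ z) j = -conj s * z i + conj c * z j := by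
  simp only [givens, add_mulVec, sub_mulVec, one_mulVec, single_mulVec, Pi.add_apply,
    Pi.sub_apply, ne_eq, hij.symm, not_false_eq_true, Function.update_of_ne, Pi.zero_apply,
    add_zero, Function.update_self]
  ring

lemma givens_mulVec_apply_of_ne (hki : k ≠ i) (hkj : k ≠ j) (z : ι → ℂ) :
    (givens i j c s *ᵥ z) k = z k := by
  simp [givens, add_mulVec, sub_mulVec, single_mulVec, hki, hkj]

lemma star_givens : star (givens i j c s) = givens i j (conj c) (-s) := by
  simp only [givens, star_add, star_sub, star_one, star_eq_conjTranspose, conjTranspose_single,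
    Complex.star_def, map_neg, Complex.conj_conj, ← single_neg]
  abel

lemma givens_mem_unitaryGroup (hij : i ≠ j) (hcs : ‖c‖ ^ 2 + ‖s‖ ^ 2 = 1) :
    givens i j c s ∈ unitaryGroup ι ℂ := by
  have hcs' : conj c * c + conj s * s = 1 := by
    simp only [mul_comm (conj _), Complex.mul_conj, ← Complex.sq_norm]
    exact_mod_cast hcs
  rw [mem_unitaryGroup_iff', star_givens, ext_iff_mulVec]
  intro z
  ext k
  rw [← mulVec_mulVec, one_mulVec]
  by_cases hki : k = i
  · subst hki
    simp only [givens_mulVec_apply_left hij, givens_mulVec_apply_right hij]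
    linear_combination z k * hcs'
  by_cases hkj : k = j
  · subst hkj
    simp only [givens_mulVec_apply_left hij, givens_mulVec_apply_right hij, Complex.conj_conj,
      map_neg]
    linear_combination z k * hcs'
  · simp only [givens_mulVec_apply_of_ne hki hkj]

end Matrix

namespace Matrix.IsHermitian

variable {𝕜 n : Type*} [RCLike 𝕜] [Fintype n] [DecidableEq n] {A : Matrix n n 𝕜}

lemma re_star_dotProduct_mulVec (hA : A.IsHermitian) (z : n → 𝕜) :
    RCLike.re (star z ⬝ᵥ (A *ᵥ z)) =
      ∑ k, hA.eigenvalues k * ‖(star (hA.eigenvectorUnitary : Matrix n n 𝕜) *ᵥ z) k‖ ^ 2 := by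
  set U : Matrix n n 𝕜 := ↑hA.eigenvectorUnitary
  have hA' : A = U * diagonal (RCLike.ofReal ∘ hA.eigenvalues) * star U := hA.spectral_theorem
  have hvec : star z ᵥ* U = star (star U *ᵥ z) := by
    rw [star_mulVec, star_eq_conjTranspose, conjTranspose_conjTranspose]
  conv_lhs => rw [hA', ← mulVec_mulVec, ← mulVec_mulVec, dotProduct_mulVec, hvec, dotProduct,
    map_sum]
  refine Finset.sum_congr rfl fun k _ => ?_
  rw [Pi.star_apply, mulVec_diagonal, mul_left_comm, RCLike.star_def, RCLike.conj_mul,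
    Function.comp_apply, ← RCLike.ofReal_pow, ← RCLike.ofReal_mul, RCLike.ofReal_re]

lemma trace_mul_self (hA : A.IsHermitian) :
    (A * A).trace = ∑ k, (hA.eigenvalues k : 𝕜) ^ 2 := by
  conv_lhs => rw [hA.spectral_theorem, ← map_mul, Unitary.conjStarAlgAut_apply, trace_mul_cycle,
    Unitary.coe_star_mul_self, one_mul, diagonal_mul_diagonal, trace_diagonal]
  simp [sq]

end Matrix.IsHermitian

theorem Complex.sum_range_four_norm_add_I_pow_mul_pow_four (a b : ℂ) :
    ∑ k ∈ Finset.range 4, ‖a + I ^ k * b‖ ^ 4 =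
      4 * (‖a‖ ^ 2 + ‖b‖ ^ 2) ^ 2 + 8 * ‖a‖ ^ 2 * ‖b‖ ^ 2 := by
  have h4 : ∀ w : ℂ, ‖w‖ ^ 4 = (‖w‖ ^ 2) ^ 2 := fun w => by ring
  simp only [Finset.sum_range_succ, Finset.sum_range_zero, h4, Complex.sq_norm, normSq_apply]
  simp only [pow_zero, one_mul, add_re, add_im, pow_succ, zero_add, mul_re, I_re, zero_mul, I_im,
    zero_sub, mul_im, I_mul_I, neg_mul, neg_re, neg_im, neg_neg]
  ring

theorem Continuous.integrable_of_ae_mem_isCompact {X E : Type*} [TopologicalSpace X] [T2Space X]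
    [MeasurableSpace X] [OpensMeasurableSpace X] [NormedAddCommGroup E] {μ : Measure X}
    [IsFiniteMeasureOnCompacts μ] {K : Set X} {f : X → E} (hf : Continuous f) (hK : IsCompact K)
    (hμK : ∀ᵐ x ∂μ, x ∈ K) : Integrable f μ := by
  have := hf.continuousOn.integrableOn_compact (μ := μ) hK
  rwa [IntegrableOn, Measure.restrict_eq_self_of_ae_mem hμK] at this

section SphereMoments

variable {ι : Type*} [Fintype ι] {μ : Measure (ι → ℂ)}

lemma pi_norm_le_one_of_sum_sq_norm_eq_one {z : ι → ℂ} (hz : ∑ i, ‖z i‖ ^ 2 = 1) : ‖z‖ ≤ 1 := by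
  refine (pi_norm_le_iff_of_nonneg zero_le_one).mpr fun i => ?_
  have : ‖z i‖ ^ 2 ≤ 1 :=
    hz ▸ Finset.single_le_sum (fun k _ => sq_nonneg ‖z k‖) (Finset.mem_univ i)
  nlinarith [norm_nonneg (z i)]

variable (hsphere : ∀ᵐ z ∂μ, ∑ i, ‖z i‖ ^ 2 = 1)

include hsphere in
lemma Continuous.integrable_of_ae_sum_sq_norm_eq_one [IsFiniteMeasure μ] {f : (ι → ℂ) → ℝ}
    (hf : Continuous f) : Integrable f μ :=
  hf.integrable_of_ae_mem_isCompact (isCompact_closedBall 0 1) <| hsphere.mono fun _ hz =>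
    mem_closedBall_zero_iff.mpr (pi_norm_le_one_of_sum_sq_norm_eq_one hz)

include hsphere in
lemma sum_sum_integral_sq_norm_mul_sq_norm [IsProbabilityMeasure μ] :
    ∑ i, ∑ j, ∫ z, ‖z i‖ ^ 2 * ‖z j‖ ^ 2 ∂μ = 1 := by
  have hint : ∀ i j : ι, Integrable (fun z : ι → ℂ => ‖z i‖ ^ 2 * ‖z j‖ ^ 2) μ := fun i j =>
    Continuous.integrable_of_ae_sum_sq_norm_eq_one hsphere (by fun_prop)
  calc ∑ i, ∑ j, ∫ z, ‖z i‖ ^ 2 * ‖z j‖ ^ 2 ∂μ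
      = ∫ z, (∑ i, ‖z i‖ ^ 2) * ∑ j, ‖z j‖ ^ 2 ∂μ := by
        simp_rw [Finset.sum_mul_sum]
        rw [integral_finsetSum _ fun i _ => integrable_finsetSum _ fun j _ => hint i j]
        exact Finset.sum_congr rfl fun i _ => (integral_finsetSum _ fun j _ => hint i j).symm
    _ = ∫ _, 1 ∂μ := integral_congr_ae (hsphere.mono fun z hz => by simp only [hz, one_mul])
    _ = 1 := by simp

variable [DecidableEq ι]
  (hunitary : ∀ U : unitaryGroup ι ℂ, μ.map ((U : Matrix ι ι ℂ) *ᵥ ·) = μ)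

include hunitary in
lemma integral_comp_mulVec_of_mem_unitaryGroup {E : Type*} [NormedAddCommGroup E]
    [NormedSpace ℝ E] {U : Matrix ι ι ℂ} (hU : U ∈ unitaryGroup ι ℂ) {f : (ι → ℂ) → E}
    (hf : Continuous f) : ∫ z, f (U *ᵥ z) ∂μ = ∫ z, f z ∂μ := by
  conv_rhs => rw [← hunitary ⟨U, hU⟩]
  exact (integral_map (by fun_prop) hf.aestronglyMeasurable).symm

include hunitary in
lemma integral_sq_norm_mul_sq_norm_self_eq (i j : ι) :
    ∫ z, ‖z i‖ ^ 2 * ‖z i‖ ^ 2 ∂μ = ∫ z, ‖z j‖ ^ 2 * ‖z j‖ ^ 2 ∂μ := by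
  rcases eq_or_ne i j with rfl | hij
  · rfl
  have hswap : ∀ z, (givens i j 0 1 *ᵥ z) i = z j := fun z => by
    simp [givens_mulVec_apply_left hij]
  simpa only [hswap] using (integral_comp_mulVec_of_mem_unitaryGroup hunitary
    (givens_mem_unitaryGroup hij (c := 0) (s := 1) (by simp))
    (f := fun z => ‖z i‖ ^ 2 * ‖z i‖ ^ 2) (by fun_prop)).symm

variable [IsProbabilityMeasure μ]

include hsphere hunitary in
lemma four_mul_integral_sq_norm_mul_sq_norm_self {i j : ι} (hij : i ≠ j) :
    4 * ∫ z, ‖z i‖ ^ 2 * ‖z i‖ ^ 2 ∂μ = ∫ z, ‖z i‖ ^ 2 * ‖z i‖ ^ 2 ∂μ +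
      ∫ z, ‖z j‖ ^ 2 * ‖z j‖ ^ 2 ∂μ + 4 * ∫ z, ‖z i‖ ^ 2 * ‖z j‖ ^ 2 ∂μ := by
  set c : ℂ := ((√2 : ℝ) : ℂ)⁻¹
  have hc : ‖c‖ ^ 2 = 2⁻¹ := by simp [c]
  have hrot : ∀ (k : ℕ) (z : ι → ℂ),
      ‖(givens i j c (Complex.I ^ k * c) *ᵥ z) i‖ ^ 2 *
        ‖(givens i j c (Complex.I ^ k * c) *ᵥ z) i‖ ^ 2 =
      4⁻¹ * ‖z i + Complex.I ^ k * z j‖ ^ 4 := fun k z => by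
    rw [givens_mulVec_apply_left hij,
      show c * z i + Complex.I ^ k * c * z j = c * (z i + Complex.I ^ k * z j) by ring, norm_mul,
      mul_pow, hc]
    ring
  have hinv : ∀ k : ℕ, ∫ z, 4⁻¹ * ‖z i + Complex.I ^ k * z j‖ ^ 4 ∂μ =
      ∫ z, ‖z i‖ ^ 2 * ‖z i‖ ^ 2 ∂μ := fun k => by
    rw [← integral_comp_mulVec_of_mem_unitaryGroup hunitary
      (givens_mem_unitaryGroup hij (c := c) (s := Complex.I ^ k * c) (by rw [norm_mul, norm_pow, Complex.norm_I, one_pow, one_mul, hc]; norm_num))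
      (f := fun z => ‖z i‖ ^ 2 * ‖z i‖ ^ 2) (by fun_prop)]
    simp only [hrot]
  have hint : ∀ f : (ι → ℂ) → ℝ, Continuous f → Integrable f μ := fun _ hf =>
    hf.integrable_of_ae_sum_sq_norm_eq_one hsphere
  calc 4 * ∫ z, ‖z i‖ ^ 2 * ‖z i‖ ^ 2 ∂μ
      = ∑ k ∈ Finset.range 4, ∫ z, 4⁻¹ * ‖z i + Complex.I ^ k * z j‖ ^ 4 ∂μ := by
        simp [hinv]
    _ = ∫ z, 4⁻¹ * ∑ k ∈ Finset.range 4, ‖z i + Complex.I ^ k * z j‖ ^ 4 ∂μ := by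
        rw [← integral_finsetSum _ fun k _ => hint _ (by fun_prop)]
        simp [Finset.mul_sum]
    _ = ∫ z, (‖z i‖ ^ 2 * ‖z i‖ ^ 2 + ‖z j‖ ^ 2 * ‖z j‖ ^ 2 +
          4 * (‖z i‖ ^ 2 * ‖z j‖ ^ 2)) ∂μ := by
        simp only [Complex.sum_range_four_norm_add_I_pow_mul_pow_four]
        ring_nf
    _ = _ := by
        rw [integral_add (hint _ (by fun_prop)) (hint _ (by fun_prop)),
          integral_add (hint _ (by fun_prop)) (hint _ (by fun_prop)), integral_const_mul]

include hsphere hunitary in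
lemma integral_sq_norm_mul_sq_norm_of_ne {i j : ι} (hij : i ≠ j) :
    ∫ z, ‖z i‖ ^ 2 * ‖z j‖ ^ 2 ∂μ = 2⁻¹ * ∫ z, ‖z i‖ ^ 2 * ‖z i‖ ^ 2 ∂μ := by
  linarith [four_mul_integral_sq_norm_mul_sq_norm_self hsphere hunitary hij,
    integral_sq_norm_mul_sq_norm_self_eq hunitary i j]

include hsphere hunitary in
lemma integral_sq_norm_mul_sq_norm (i j : ι) :
    ∫ z, ‖z i‖ ^ 2 * ‖z j‖ ^ 2 ∂μ =
      (1 + if i = j then 1 else 0) / (Fintype.card ι * (Fintype.card ι + 1)) := by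
  have hM : ∀ k l : ι, ∫ z, ‖z k‖ ^ 2 * ‖z l‖ ^ 2 ∂μ =
      (1 + if k = l then 1 else 0) * (2⁻¹ * ∫ z, ‖z i‖ ^ 2 * ‖z i‖ ^ 2 ∂μ) := by
    intro k l
    split_ifs with hkl
    · subst hkl
      rw [integral_sq_norm_mul_sq_norm_self_eq hunitary k i]
      ring
    · rw [integral_sq_norm_mul_sq_norm_of_ne hsphere hunitary hkl,
        integral_sq_norm_mul_sq_norm_self_eq hunitary k i, add_zero, one_mul]
  generalize ∫ z, ‖z i‖ ^ 2 * ‖z i‖ ^ 2 ∂μ = m at hM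
  have hrow : ∀ k : ι, ∑ l, (1 + if k = l then (1 : ℝ) else 0) = Fintype.card ι + 1 := by
    simp [Finset.sum_add_distrib]
  have htotal := sum_sum_integral_sq_norm_mul_sq_norm hsphere (μ := μ)
  simp_rw [hM, ← Finset.sum_mul, hrow, Finset.sum_const, Finset.card_univ, nsmul_eq_mul] at htotal
  have hN : (0 : ℝ) < Fintype.card ι := Nat.cast_pos.mpr (Fintype.card_pos_iff.mpr ⟨i⟩)
  rw [hM, eq_div_iff (by positivity)]
  linear_combination (1 + if i = j then (1 : ℝ) else 0) * htotal

include hsphere hunitary in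
lemma integral_sq_sum_mul_sq_norm (d : ι → ℝ) :
    ∫ z, (∑ k, d k * ‖z k‖ ^ 2) ^ 2 ∂μ =
      (∑ k, d k ^ 2 + (∑ k, d k) ^ 2) / (Fintype.card ι * (Fintype.card ι + 1)) := by
  have hint : ∀ k l : ι, Integrable (fun z : ι → ℂ => d k * d l * (‖z k‖ ^ 2 * ‖z l‖ ^ 2)) μ :=
    fun k l => Continuous.integrable_of_ae_sum_sq_norm_eq_one hsphere (by fun_prop)
  calc ∫ z, (∑ k, d k * ‖z k‖ ^ 2) ^ 2 ∂μ
      = ∫ z, ∑ k, ∑ l, d k * d l * (‖z k‖ ^ 2 * ‖z l‖ ^ 2) ∂μ := by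
        simp_rw [sq, Finset.sum_mul_sum, mul_mul_mul_comm]
    _ = ∑ k, ∑ l, d k * d l * ∫ z, ‖z k‖ ^ 2 * ‖z l‖ ^ 2 ∂μ := by
        rw [integral_finsetSum _ fun k _ => integrable_finsetSum _ fun l _ => hint k l]
        refine Finset.sum_congr rfl fun k _ => ?_
        rw [integral_finsetSum _ fun l _ => hint k l]
        exact Finset.sum_congr rfl fun l _ => integral_const_mul _ _
    _ = _ := by
        simp_rw [integral_sq_norm_mul_sq_norm hsphere hunitary, mul_div_assoc', ← Finset.sum_div]
        congr 1
        simp_rw [mul_add, Finset.sum_add_distrib, mul_ite, mul_one, mul_zero, Finset.sum_ite_eq,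
          Finset.mem_univ, if_true, sq, Finset.sum_mul_sum]
        exact add_comm _ _

end SphereMoments

/-- For `z` uniform on the unit sphere of `ℂ^N` and `Λ` Hermitian,
`E[(zᴴ Λ z)²] = (Tr(Λ²) + Tr(Λ)²)/(N(N+1))`. -/
theorem expectation_quadForm_sq_sphere {N : ℕ}
    (μ : Measure (Fin N → ℂ)) [IsProbabilityMeasure μ]
    (hsphere : ∀ᵐ z ∂μ, ∑ i, ‖z i‖ ^ 2 = 1)
    (hunitary : ∀ U : Matrix.unitaryGroup (Fin N) ℂ,
      Measure.map (fun z => (U : Matrix (Fin N) (Fin N) ℂ) *ᵥ z) μ = μ)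
    (Λ : Matrix (Fin N) (Fin N) ℂ) (hΛ : Λ.IsHermitian) :
    ∫ z, ((star z ⬝ᵥ (Λ *ᵥ z)).re) ^ 2 ∂μ =
      ((Λ * Λ).trace.re + (Λ.trace.re) ^ 2) / ((N : ℝ) * ((N : ℝ) + 1)) := by
  have hU : star (hΛ.eigenvectorUnitary : Matrix (Fin N) (Fin N) ℂ) ∈ unitaryGroup (Fin N) ℂ :=
    (star hΛ.eigenvectorUnitary).2
  calc ∫ z, ((star z ⬝ᵥ (Λ *ᵥ z)).re) ^ 2 ∂μ
      = ∫ z, (∑ k, hΛ.eigenvalues k *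
          ‖(star (hΛ.eigenvectorUnitary : Matrix _ _ ℂ) *ᵥ z) k‖ ^ 2) ^ 2 ∂μ := by
        simp_rw [← RCLike.re_to_complex, hΛ.re_star_dotProduct_mulVec]
    _ = ∫ z, (∑ k, hΛ.eigenvalues k * ‖z k‖ ^ 2) ^ 2 ∂μ :=
        integral_comp_mulVec_of_mem_unitaryGroup hunitary hU
          (f := fun z => (∑ k, hΛ.eigenvalues k * ‖z k‖ ^ 2) ^ 2) (by fun_prop)
    _ = _ := by
        rw [integral_sq_sum_mul_sq_norm hsphere hunitary, hΛ.trace_mul_self,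
          hΛ.trace_eq_sum_eigenvalues]
        simp [← Complex.ofReal_pow]
end
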